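/- arXiv:1407.2593 — 2 statements merged into one kernel-verified Lean document; each statement's English description precedes it below -/
import Mathlib

section
/- Among optimal solutions of the dual BCC model, a solution minimizes the number of indices j with zero slack t_j = 0 if and only if its zero-slack index set equals the intersection over all dual optimal solutions of their zero-slack index sets. -/
/-!
The optimal dual solutions form a convex set, and the midpoint of two of them has zero slack
exactly where both have zero slack. Hence the family of zero-slack sets of optimal solutions is
directed under reverse inclusion, and in such a family of finite sets a member of least
cardinality lies inside every other member, i.e. equals the intersection of the family.
-/

open Finset

theorem DirectedOn.ncard_le_iff_eq_sInter {α : Type*} [Finite α] {S : Set (Set α)}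
    (hS : DirectedOn (· ⊇ ·) S) {A : Set α} (hA : A ∈ S) :
    (∀ B ∈ S, A.ncard ≤ B.ncard) ↔ A = ⋂₀ S := by
  refine ⟨fun hmin => ?_, fun hA' B hB => hA' ▸ Set.ncard_le_ncard (Set.sInter_subset_of_mem hB)⟩
  refine (Set.subset_sInter fun B hB => ?_).antisymm (Set.sInter_subset_of_mem hA)
  obtain ⟨C, hC, hCA, hCB⟩ := hS A hA B hB
  have hAB : A ∩ B = A := Set.eq_of_subset_of_ncard_le Set.inter_subset_left
    ((hmin C hC).trans (Set.ncard_le_ncard (Set.subset_inter hCA hCB)))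
  exact hAB ▸ Set.inter_subset_right

theorem setOf_half_add_eq_zero {ι : Type*} {t t' : ι → ℝ} (ht : 0 ≤ t) (ht' : 0 ≤ t') :
    {j | (t j + t' j) / 2 = 0} = {j | t j = 0} ∩ {j | t' j = 0} := by
  ext j
  simp [add_eq_zero_iff_of_nonneg (ht j) (ht' j)]

theorem sum_half_add_mul {ι : Type*} (u : Finset ι) (a b c : ι → ℝ) :
    ∑ i ∈ u, (a i + b i) / 2 * c i = ((∑ i ∈ u, a i * c i) + ∑ i ∈ u, b i * c i) / 2 := by
  rw [← Finset.sum_add_distrib, Finset.sum_div]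
  exact Finset.sum_congr rfl fun i _ => by ring

section DualBCC

variable {m s n : ℕ} {o : Fin n} {x : Fin n → Fin m → ℝ} {y : Fin n → Fin s → ℝ}
  {V V' : Fin m → ℝ} {U U' : Fin s → ℝ} {u0 u0' : ℝ} {t t' : Fin n → ℝ}

def DualBCCConstraints (o : Fin n) (x : Fin n → Fin m → ℝ) (y : Fin n → Fin s → ℝ)
    (V : Fin m → ℝ) (U : Fin s → ℝ) (u0 : ℝ) (t : Fin n → ℝ) : Prop :=
  (∑ i, V i * x o i) = 1 ∧
    (∀ j, (∑ r, U r * y j r) - (∑ i, V i * x j i) + u0 + t j = 0) ∧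
    (∀ r, 0 ≤ U r) ∧ (∀ i, 0 ≤ V i) ∧ (∀ j, 0 ≤ t j)

theorem DualBCCConstraints.midpoint (h : DualBCCConstraints o x y V U u0 t)
    (h' : DualBCCConstraints o x y V' U' u0' t') :
    DualBCCConstraints o x y (fun i => (V i + V' i) / 2) (fun r => (U r + U' r) / 2)
      ((u0 + u0') / 2) (fun j => (t j + t' j) / 2) := by
  obtain ⟨hx, hc, hU, hV, ht⟩ := h
  obtain ⟨hx', hc', hU', hV', ht'⟩ := h'
  refine ⟨?_, fun j => ?_, fun r => ?_, fun i => ?_, fun j => ?_⟩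
  · rw [sum_half_add_mul, hx, hx']
    norm_num
  · rw [sum_half_add_mul, sum_half_add_mul]
    linarith [hc j, hc' j]
  · linarith [hU r, hU' r]
  · linarith [hV i, hV' i]
  · linarith [ht j, ht' j]

theorem dualOptimal_midpoint
    {DualFeasible DualOptimal : (Fin m → ℝ) → (Fin s → ℝ) → ℝ → (Fin n → ℝ) → Prop}
    (hFeas : ∀ V U u0 t, DualFeasible V U u0 t ↔ DualBCCConstraints o x y V U u0 t)
    (hOpt : ∀ V U u0 t, DualOptimal V U u0 t ↔
      (DualFeasible V U u0 t ∧
       ∀ V' U' u0' t', DualFeasible V' U' u0' t' →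
         (∑ r, U' r * y o r) + u0' ≤ (∑ r, U r * y o r) + u0))
    (h : DualOptimal V U u0 t) (h' : DualOptimal V' U' u0' t') :
    DualOptimal (fun i => (V i + V' i) / 2) (fun r => (U r + U' r) / 2) ((u0 + u0') / 2)
      (fun j => (t j + t' j) / 2) := by
  rw [hOpt] at h h' ⊢
  obtain ⟨hf, hmax⟩ := h
  obtain ⟨hf', hmax'⟩ := h'
  refine ⟨(hFeas _ _ _ _).2 (((hFeas _ _ _ _).1 hf).midpoint ((hFeas _ _ _ _).1 hf')),
    fun V'' U'' u0'' t'' hf'' => ?_⟩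
  rw [sum_half_add_mul]
  linarith [hmax _ _ _ _ hf'', hmax' _ _ _ _ hf'']

end DualBCC

theorem min_zero_slack_iff_intersection_general (m s n : ℕ) (o : Fin n)
    (x : Fin n → Fin m → ℝ) (y : Fin n → Fin s → ℝ)
    (DualFeasible : (Fin m → ℝ) → (Fin s → ℝ) → ℝ → (Fin n → ℝ) → Prop)
    (hFeas : ∀ V U u0 tS, DualFeasible V U u0 tS ↔
      ((∑ i, V i * x o i) = 1 ∧
       (∀ j, (∑ r, U r * y j r) - (∑ i, V i * x j i) + u0 + tS j = 0) ∧
       (∀ r, 0 ≤ U r) ∧ (∀ i, 0 ≤ V i) ∧ (∀ j, 0 ≤ tS j)))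
    (DualOptimal : (Fin m → ℝ) → (Fin s → ℝ) → ℝ → (Fin n → ℝ) → Prop)
    (hOpt : ∀ V U u0 tS, DualOptimal V U u0 tS ↔
      (DualFeasible V U u0 tS ∧
       ∀ V' U' u0' tS', DualFeasible V' U' u0' tS' →
         (∑ r, U' r * y o r) + u0' ≤ (∑ r, U r * y o r) + u0))
    (V : Fin m → ℝ) (U : Fin s → ℝ) (u0 : ℝ) (tS : Fin n → ℝ)
    (h : DualOptimal V U u0 tS) :
    (∀ V' U' u0' tS', DualOptimal V' U' u0' tS' →
        Set.ncard {j | tS j = 0} ≤ Set.ncard {j | tS' j = 0}) ↔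
      {j | tS j = 0} =
        {j | ∀ V' U' u0' tS', DualOptimal V' U' u0' tS' → tS' j = 0} := by
  have slack_nonneg {V U u0 t} (h : DualOptimal V U u0 t) : 0 ≤ t :=
    (((hFeas _ _ _ _).1 ((hOpt _ _ _ _).1 h).1).2.2.2.2 ·)
  set S : Set (Set (Fin n)) := {Z | ∃ V U u0 t, DualOptimal V U u0 t ∧ {j | t j = 0} = Z}
  have hS : DirectedOn (· ⊇ ·) S := by
    rintro _ ⟨V, U, u0, t, h, rfl⟩ _ ⟨V', U', u0', t', h', rfl⟩
    refine ⟨_, ⟨_, _, _, _, dualOptimal_midpoint hFeas hOpt h h', rfl⟩, ?_⟩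
    rw [setOf_half_add_eq_zero (slack_nonneg h) (slack_nonneg h')]
    exact ⟨Set.inter_subset_left, Set.inter_subset_right⟩
  convert hS.ncard_le_iff_eq_sInter ⟨V, U, u0, tS, h, rfl⟩ using 2
  · exact ⟨fun H _ ⟨V', U', u0', t', h', hB⟩ => hB ▸ H V' U' u0' t' h',
      fun H V' U' u0' t' h' => H _ ⟨V', U', u0', t', h', rfl⟩⟩
  · exact Set.ext fun j => ⟨fun H _ ⟨V', U', u0', t', h', hB⟩ => hB ▸ H V' U' u0' t' h',
      fun H V' U' u0' t' h' => H _ ⟨V', U', u0', t', h', rfl⟩⟩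

/-- Among optimal solutions of the dual BCC model, a solution minimizes the
number of zero slacks iff its zero-slack index set equals the intersection
over all dual optimal solutions of their zero-slack index sets. -/
theorem min_zero_slack_iff_intersection (m s n : ℕ) (o : Fin n)
    (x : Fin n → Fin m → ℝ) (y : Fin n → Fin s → ℝ)
    (DualFeasible : (Fin m → ℝ) → (Fin s → ℝ) → ℝ → (Fin n → ℝ) → Prop)
    (hFeas : ∀ V U u0 tS, DualFeasible V U u0 tS ↔
      ((∑ i, V i * x o i) = 1 ∧
       (∀ j, (∑ r, U r * y j r) - (∑ i, V i * x j i) + u0 + tS j = 0) ∧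
       (∀ r, 0 ≤ U r) ∧ (∀ i, 0 ≤ V i) ∧ (∀ j, 0 ≤ tS j)))
    (DualOptimal : (Fin m → ℝ) → (Fin s → ℝ) → ℝ → (Fin n → ℝ) → Prop)
    (hOpt : ∀ V U u0 tS, DualOptimal V U u0 tS ↔
      (DualFeasible V U u0 tS ∧
       ∀ V' U' u0' tS', DualFeasible V' U' u0' tS' →
         (∑ r, U' r * y o r) + u0' ≤ (∑ r, U r * y o r) + u0))
    (hne : ∃ V U u0 tS, DualOptimal V U u0 tS)
    (V : Fin m → ℝ) (U : Fin s → ℝ) (u0 : ℝ) (tS : Fin n → ℝ)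
    (h : DualOptimal V U u0 tS) :
    (∀ V' U' u0' tS', DualOptimal V' U' u0' tS' →
        Set.ncard {j | tS j = 0} ≤ Set.ncard {j | tS' j = 0}) ↔
      {j | tS j = 0} =
        {j | ∀ V' U' u0' tS', DualOptimal V' U' u0' tS' → tS' j = 0} :=
  min_zero_slack_iff_intersection_general m s n o x y DualFeasible hFeas DualOptimal hOpt V U u0 tS
    h
end

section
/- Pareto-efficiency of additive-model reference DMUs: if λ* is optimal for the additive model evaluating DMU_o and λ*_k > 0, then DMU_k is itself additive-efficient, i.e., the optimal value of the additive model evaluating DMU_k is zero. -/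
/-!
If `λ*` is optimal for DMU_o and `c = λ*_k > 0`, then for any feasible `(λ, s⁻, s⁺)` of the
model of DMU_k, replacing DMU_k inside `λ*` by the mixture `λ`, i.e. taking
`λ* + c (λ - e_k)` with slacks `s* + c s`, stays feasible for DMU_o and increases the
slack sum by `c · (Σ s⁻ + Σ s⁺)`. Optimality of `λ*` forces this increase to be `≤ 0`.
-/

open Finset

namespace AdditiveModel

variable {ι μ σ : Type*} [Fintype ι]

/-- `sm`, `sp` are the slacks `s⁻`, `s⁺`; the evaluated point `(xo, yo)` need not be a DMU. -/
def Feasible (x : ι → μ → ℝ) (y : ι → σ → ℝ) (xo : μ → ℝ) (yo : σ → ℝ)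
    (lam : ι → ℝ) (sm : μ → ℝ) (sp : σ → ℝ) : Prop :=
  (∀ i, (∑ j, lam j * x j i) + sm i = xo i) ∧
  (∀ r, (∑ j, lam j * y j r) - sp r = yo r) ∧
  (∑ j, lam j = 1) ∧ (∀ j, 0 ≤ lam j) ∧ (∀ i, 0 ≤ sm i) ∧ (∀ r, 0 ≤ sp r)

def slackSum [Fintype μ] [Fintype σ] (sm : μ → ℝ) (sp : σ → ℝ) : ℝ :=
  (∑ i, sm i) + (∑ r, sp r)

theorem slackSum_zero [Fintype μ] [Fintype σ] : slackSum (0 : μ → ℝ) (0 : σ → ℝ) = 0 := by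
  simp [slackSum]

theorem slackSum_add_smul [Fintype μ] [Fintype σ] (sm₀ sm : μ → ℝ) (sp₀ sp : σ → ℝ) (c : ℝ) :
    slackSum (sm₀ + c • sm) (sp₀ + c • sp) = slackSum sm₀ sp₀ + c * slackSum sm sp := by
  simp only [slackSum, Pi.add_apply, Pi.smul_apply, smul_eq_mul, sum_add_distrib, ← mul_sum]
  ring

variable [DecidableEq ι]

theorem sum_single_mul (k : ι) (f : ι → ℝ) : ∑ j, (Pi.single k 1 : ι → ℝ) j * f j = f k := by
  simp [Pi.single_apply, ite_mul]

theorem sum_add_mul_sub_single_mul (a b f : ι → ℝ) (c : ℝ) (k : ι) :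
    ∑ j, (a j + c * (b j - (Pi.single k 1 : ι → ℝ) j)) * f j =
      ∑ j, a j * f j + c * (∑ j, b j * f j - f k) := by
  simp only [add_mul, mul_assoc, sub_mul, sum_add_distrib, ← mul_sum, sum_sub_distrib,
    sum_single_mul]

theorem feasible_single (x : ι → μ → ℝ) (y : ι → σ → ℝ) (k : ι) :
    Feasible x y (x k) (y k) (Pi.single k 1) 0 0 := by
  refine ⟨fun i => ?_, fun r => ?_, ?_, fun j => ?_, fun _ => le_rfl, fun _ => le_rfl⟩
  · simp [sum_single_mul]
  · simp [sum_single_mul]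
  · simp
  · by_cases h : j = k <;> simp [h]

theorem Feasible.reassign {x : ι → μ → ℝ} {y : ι → σ → ℝ} {xo : μ → ℝ} {yo : σ → ℝ}
    {a b : ι → ℝ} {sm₀ sm : μ → ℝ} {sp₀ sp : σ → ℝ} {k : ι} {c : ℝ}
    (ha : Feasible x y xo yo a sm₀ sp₀) (hb : Feasible x y (x k) (y k) b sm sp)
    (hc : 0 ≤ c) (hck : c ≤ a k) :
    Feasible x y xo yo (fun j => a j + c * (b j - (Pi.single k 1 : ι → ℝ) j))
      (sm₀ + c • sm) (sp₀ + c • sp) := by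
  obtain ⟨hax, hay, ha1, ha0, hsm₀, hsp₀⟩ := ha
  obtain ⟨hbx, hby, hb1, hb0, hsm, hsp⟩ := hb
  refine ⟨fun i => ?_, fun r => ?_, ?_, fun j => ?_, fun i => ?_, fun r => ?_⟩
  · rw [sum_add_mul_sub_single_mul]
    simp only [Pi.add_apply, Pi.smul_apply, smul_eq_mul]
    linear_combination hax i + c * hbx i
  · rw [sum_add_mul_sub_single_mul]
    simp only [Pi.add_apply, Pi.smul_apply, smul_eq_mul]
    linear_combination hay r + c * hby r
  · simpa [ha1, hb1] using sum_add_mul_sub_single_mul a b (fun _ => 1) c k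
  · by_cases h : j = k
    · subst h
      simp only [Pi.single_eq_same]
      linarith [mul_nonneg hc (hb0 j)]
    · simp only [Pi.single_eq_of_ne h, sub_zero]
      exact add_nonneg (ha0 j) (mul_nonneg hc (hb0 j))
  · exact add_nonneg (hsm₀ i) (mul_nonneg hc (hsm i))
  · exact add_nonneg (hsp₀ r) (mul_nonneg hc (hsp r))

end AdditiveModel

theorem additive_reference_DMUs_efficient_general (m s n : ℕ) (o k : Fin n)
    (x : Fin n → Fin m → ℝ) (y : Fin n → Fin s → ℝ)
    (Feasible : Fin n → (Fin n → ℝ) → (Fin m → ℝ) → (Fin s → ℝ) → Prop)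
    (hFeas : ∀ p lam sm sp, Feasible p lam sm sp ↔
      ((∀ i, (∑ j, lam j * x j i) + sm i = x p i) ∧
       (∀ r, (∑ j, lam j * y j r) - sp r = y p r) ∧
       (∑ j, lam j = 1) ∧ (∀ j, 0 ≤ lam j) ∧
       (∀ i, 0 ≤ sm i) ∧ (∀ r, 0 ≤ sp r)))
    (lamStar : Fin n → ℝ) (smStar : Fin m → ℝ) (spStar : Fin s → ℝ)
    (hFeasStar : Feasible o lamStar smStar spStar)
    (hOptStar : ∀ lam sm sp, Feasible o lam sm sp →
      (∑ i, sm i) + (∑ r, sp r) ≤ (∑ i, smStar i) + (∑ r, spStar r))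
    (hk : 0 < lamStar k) :
    IsGreatest {v : ℝ | ∃ lam sm sp, Feasible k lam sm sp ∧
        v = (∑ i, sm i) + (∑ r, sp r)}
      0 := by
  have hF : ∀ p lam sm sp,
      Feasible p lam sm sp ↔ AdditiveModel.Feasible x y (x p) (y p) lam sm sp := hFeas
  refine ⟨⟨Pi.single k 1, 0, 0, (hF _ _ _ _).2 (AdditiveModel.feasible_single x y k),
    AdditiveModel.slackSum_zero.symm⟩, ?_⟩
  rintro v ⟨lam, sm, sp, hkFeas, rfl⟩
  have hmix := AdditiveModel.Feasible.reassign
    ((hF _ _ _ _).1 hFeasStar) ((hF _ _ _ _).1 hkFeas) hk.le le_rfl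
  have hle : AdditiveModel.slackSum (smStar + lamStar k • sm) (spStar + lamStar k • sp) ≤
      AdditiveModel.slackSum smStar spStar := hOptStar _ _ _ ((hF _ _ _ _).2 hmix)
  rw [AdditiveModel.slackSum_add_smul] at hle
  exact nonpos_of_mul_nonpos_right (b := AdditiveModel.slackSum sm sp) (by linarith) hk

/-- Pareto-efficiency of additive-model reference DMUs: if (λ*, s⁻, s⁺) is
optimal for the additive model evaluating DMU_o and λ*_k > 0, then DMU_k is
additive-efficient (the additive model evaluating DMU_k has optimal value 0). -/
theorem additive_reference_DMUs_efficient (m s n : ℕ) (o k : Fin n)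
    (x : Fin n → Fin m → ℝ) (y : Fin n → Fin s → ℝ)
    (hx : ∀ j i, 0 ≤ x j i) (hy : ∀ j r, 0 ≤ y j r)
    (Feasible : Fin n → (Fin n → ℝ) → (Fin m → ℝ) → (Fin s → ℝ) → Prop)
    (hFeas : ∀ p lam sm sp, Feasible p lam sm sp ↔
      ((∀ i, (∑ j, lam j * x j i) + sm i = x p i) ∧
       (∀ r, (∑ j, lam j * y j r) - sp r = y p r) ∧
       (∑ j, lam j = 1) ∧ (∀ j, 0 ≤ lam j) ∧
       (∀ i, 0 ≤ sm i) ∧ (∀ r, 0 ≤ sp r)))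
    (lamStar : Fin n → ℝ) (smStar : Fin m → ℝ) (spStar : Fin s → ℝ)
    (hFeasStar : Feasible o lamStar smStar spStar)
    (hOptStar : ∀ lam sm sp, Feasible o lam sm sp →
      (∑ i, sm i) + (∑ r, sp r) ≤ (∑ i, smStar i) + (∑ r, spStar r))
    (hk : 0 < lamStar k) :
    IsGreatest {v : ℝ | ∃ lam sm sp, Feasible k lam sm sp ∧
        v = (∑ i, sm i) + (∑ r, sp r)}
      0 :=
  additive_reference_DMUs_efficient_general m s n o k x y Feasible hFeas lamStar smStar spStar
    hFeasStar hOptStar hk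
end
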